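/- arXiv:math/0603148 — 3 statements merged into one kernel-verified Lean document; each statement's English description precedes it below -/
import Mathlib

section
/- Let A ≥ c₂ > c₁ > 0 be real numbers. Then there exists θ > 0 such that for every positive integer N and all real numbers a₁, …, a_N satisfying a_j ≤ A for every 1 ≤ j ≤ N and ∑_{j=1}^{N} a_j ≥ c₂·N, there exist an integer l > θ·N and integers 1 ≤ n₁ < n₂ < ⋯ < n_l ≤ N such that ∑_{j=n+1}^{n_i} a_j ≥ c₁·(n_i − n) for every integer n with 0 ≤ n < n_i and every 1 ≤ i ≤ l. -/
/-!
Put `S n = ∑_{j ≤ n} (a_j - c₁)`, so that `S 0 = 0`, `S N ≥ (c₂ - c₁) N` and `S` grows by at most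
`A - c₁` per step. The good indices are exactly the record times of `S`, the `n ≥ 1` with
`S m ≤ S n` for all `m < n`. Between records the maximum of `S` does not increase and at a record
it increases by at most `A - c₁`, so there are at least `(c₂ - c₁) N / (A - c₁)` records.
-/

open Finset

noncomputable def recordTimes (s : ℕ → ℝ) (N : ℕ) : Finset ℕ :=
  {n ∈ Icc 1 N | ∀ m < n, s m ≤ s n}

lemma recordTimes_mono (s : ℕ → ℝ) {k k' : ℕ} (h : k ≤ k') :
    recordTimes s k ⊆ recordTimes s k' :=
  filter_subset_filter _ (Icc_subset_Icc_right h)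

lemma recordTimes_succ_of_forall_le {s : ℕ → ℝ} {k : ℕ} (h : ∀ m < k + 1, s m ≤ s (k + 1)) :
    recordTimes s (k + 1) = insert (k + 1) (recordTimes s k) := by
  rw [recordTimes, ← insert_Icc_right_eq_Icc_add_one (by omega), filter_insert, if_pos h,
    recordTimes]

lemma le_add_mul_card_recordTimes {s : ℕ → ℝ} {B : ℝ} {N : ℕ} (hB : 0 ≤ B)
    (hs : ∀ k < N, s (k + 1) ≤ s k + B) : ∀ j ≤ N, s j ≤ s 0 + B * #(recordTimes s N) := by
  induction N with
  | zero => intro j hj; simp [Nat.le_zero.mp hj, recordTimes]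
  | succ k ih =>
    have ih := ih fun i hi => hs i (by omega)
    have hmono : B * #(recordTimes s k) ≤ B * #(recordTimes s (k + 1)) :=
      mul_le_mul_of_nonneg_left (by exact_mod_cast card_le_card (recordTimes_mono s k.le_succ)) hB
    intro j hj
    rcases Nat.lt_succ_iff_lt_or_eq.mp (Nat.lt_succ_of_le hj) with hj | rfl
    · linarith [ih j (by omega)]
    by_cases hrec : ∀ m < k + 1, s m ≤ s (k + 1)
    · have hnotmem : k + 1 ∉ recordTimes s k := fun h => by
        have := (mem_Icc.mp (mem_filter.mp h).1).2; omega
      rw [recordTimes_succ_of_forall_le hrec, card_insert_of_notMem hnotmem]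
      push_cast
      linarith [ih k le_rfl, hs k (by omega)]
    · simp only [not_forall, not_le] at hrec
      obtain ⟨m, hm, hlt⟩ := hrec
      linarith [ih m (by omega)]

lemma sum_Icc_succ_eq_sub (f : ℕ → ℝ) {m n : ℕ} (h : m ≤ n) :
    ∑ j ∈ Icc (m + 1) n, f j = ∑ j ∈ Icc 1 n, f j - ∑ j ∈ Icc 1 m, f j := by
  have hIoc (k : ℕ) : Icc 1 k = Ioc 0 k := Icc_add_one_left_eq_Ioc 0 k
  rw [eq_sub_iff_add_eq', Icc_add_one_left_eq_Ioc, hIoc, hIoc, sum_Ioc_consecutive f m.zero_le h]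

lemma sum_Icc_sub_const (f : ℕ → ℝ) (c : ℝ) {m n : ℕ} (h : m ≤ n) :
    ∑ j ∈ Icc (m + 1) n, (f j - c) = ∑ j ∈ Icc (m + 1) n, f j - c * (n - m) := by
  rw [sum_sub_distrib, sum_const, Nat.card_Icc, nsmul_eq_mul, Nat.add_sub_add_right,
    Nat.cast_sub h, mul_comm]

lemma mul_sub_le_sum_Icc_of_le {f : ℕ → ℝ} {c : ℝ} {m n : ℕ} (hmn : m ≤ n)
    (h : ∑ j ∈ Icc 1 m, (f j - c) ≤ ∑ j ∈ Icc 1 n, (f j - c)) :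
    c * (n - m) ≤ ∑ j ∈ Icc (m + 1) n, f j := by
  have := sum_Icc_succ_eq_sub (fun j => f j - c) hmn
  rw [sum_Icc_sub_const f c hmn] at this
  linarith

lemma exists_strictMono_enum (t : Finset ℕ) :
    ∃ n : ℕ → ℕ, (∀ i, 1 ≤ i → i ≤ #t → n i ∈ t) ∧
      ∀ i i', 1 ≤ i → i < i' → i' ≤ #t → n i < n i' := by
  refine ⟨fun i => if h : i - 1 < #t then t.orderEmbOfFin rfl ⟨i - 1, h⟩ else 0, ?_, ?_⟩
  · intro i hi hit
    simp only [dif_pos (show i - 1 < #t by omega)]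
    exact t.orderEmbOfFin_mem rfl _
  · intro i i' hi hii' hi't
    simp only [dif_pos (show i - 1 < #t by omega), dif_pos (show i' - 1 < #t by omega)]
    exact (t.orderEmbOfFin rfl).strictMono (Fin.mk_lt_mk.mpr (by omega))

theorem pliss_lemma_general (A c₁ c₂ : ℝ) (hc₁c₂ : c₁ < c₂) (hc₂A : c₂ ≤ A) :
    ∃ θ : ℝ, 0 < θ ∧
      ∀ (N : ℕ), 0 < N → ∀ a : ℕ → ℝ,
        (∀ j, 1 ≤ j → j ≤ N → a j ≤ A) →
        c₂ * (N : ℝ) ≤ ∑ j ∈ Finset.Icc 1 N, a j →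
        ∃ (l : ℕ) (n : ℕ → ℕ),
          θ * (N : ℝ) < (l : ℝ) ∧
          (∀ i, 1 ≤ i → i ≤ l → 1 ≤ n i ∧ n i ≤ N) ∧
          (∀ i i', 1 ≤ i → i < i' → i' ≤ l → n i < n i') ∧
          (∀ i, 1 ≤ i → i ≤ l → ∀ m : ℕ, m < n i →
            c₁ * ((n i : ℝ) - (m : ℝ)) ≤ ∑ j ∈ Finset.Icc (m + 1) (n i), a j) := by
  have hAc₁ : 0 < A - c₁ := by linarith
  -- half the density `(c₂ - c₁) / (A - c₁)` of record times, so that the bound is strict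
  refine ⟨(c₂ - c₁) / (2 * (A - c₁)), div_pos (by linarith) (by linarith), ?_⟩
  intro N hN a ha hsum
  set S : ℕ → ℝ := fun n => ∑ j ∈ Icc 1 n, (a j - c₁)
  have hstep (k : ℕ) (hk : k < N) : S (k + 1) ≤ S k + (A - c₁) := by
    simp only [S, sum_Icc_succ_top (Nat.le_add_left 1 k)]
    linarith [ha (k + 1) (by omega) hk]
  have hcount := le_add_mul_card_recordTimes hAc₁.le hstep N le_rfl
  have hSN : S N = ∑ j ∈ Icc 1 N, a j - c₁ * N := by
    simpa only [zero_add, Nat.cast_zero, sub_zero] using sum_Icc_sub_const a c₁ N.zero_le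
  obtain ⟨n, hmem, hmono⟩ := exists_strictMono_enum (recordTimes S N)
  refine ⟨_, n, ?_, fun i hi hil => ?_, hmono, fun i hi hil m hm => ?_⟩
  · have hN : (0 : ℝ) < N := by exact_mod_cast hN
    have hS0 : S 0 = 0 := by simp [S]
    rw [div_mul_eq_mul_div, div_lt_iff₀ (by positivity)]
    nlinarith
  · exact mem_Icc.mp (mem_filter.mp (hmem i hi hil)).1
  · exact mul_sub_le_sum_Icc_of_le hm.le ((mem_filter.mp (hmem i hi hil)).2 m hm)

/-- **Pliss Lemma.** Given real numbers `A ≥ c₂ > c₁ > 0` there exists `θ > 0` such that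
for every positive integer `N` and real numbers `a₁, …, a_N` bounded above by `A` with
`∑_{j=1}^N a_j ≥ c₂ N`, there are `l > θ N` indices `1 ≤ n₁ < ⋯ < n_l ≤ N` such that
`∑_{j=n+1}^{n_i} a_j ≥ c₁ (n_i - n)` for all `0 ≤ n < n_i` and `1 ≤ i ≤ l`. -/
theorem pliss_lemma (A c₁ c₂ : ℝ) (hc₁ : 0 < c₁) (hc₁c₂ : c₁ < c₂) (hc₂A : c₂ ≤ A) :
    ∃ θ : ℝ, 0 < θ ∧
      ∀ (N : ℕ), 0 < N → ∀ a : ℕ → ℝ,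
        (∀ j, 1 ≤ j → j ≤ N → a j ≤ A) →
        c₂ * (N : ℝ) ≤ ∑ j ∈ Finset.Icc 1 N, a j →
        ∃ (l : ℕ) (n : ℕ → ℕ),
          θ * (N : ℝ) < (l : ℝ) ∧
          (∀ i, 1 ≤ i → i ≤ l → 1 ≤ n i ∧ n i ≤ N) ∧
          (∀ i i', 1 ≤ i → i < i' → i' ≤ l → n i < n i') ∧
          (∀ i, 1 ≤ i → i ≤ l → ∀ m : ℕ, m < n i →
            c₁ * ((n i : ℝ) - (m : ℝ)) ≤ ∑ j ∈ Finset.Icc (m + 1) (n i), a j) :=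
  pliss_lemma_general A c₁ c₂ hc₁c₂ hc₂A
end

section
/- Let (b_j)_{j≥1} be a sequence of positive real numbers, and let A > 0, c > 0 be such that |log b_j| ≤ A for every j ≥ 1. Assume that liminf_{n→∞} (1/n) ∑_{j=1}^{n} log b_j < −c. Then, setting σ = e^{−c/2} ∈ (0,1), the set of σ-hyperbolic times for (b_j) is infinite; that is, there are infinitely many integers n ≥ 1 such that ∏_{j=n−k+1}^{n} b_j ≤ σ^k for all 1 ≤ k ≤ n. -/
/-!
With `S n = ∑_{j ≤ n} log b_j`, a record minimum `p` of the tilted sums `T n = S n + (c/2) n`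
(that is, `T p ≤ T m` for all `m ≤ p`) is a `σ`-hyperbolic time, because
`∑_{j = p-k+1}^{p} log b_j = S p - S (p-k) ≤ -(c/2) k`. The liminf hypothesis forces
`T n < -(c/2) n` for infinitely many `n`, so `T` is unbounded below and has infinitely many
record minima.
-/

open Finset Filter Real

theorem Set.infinite_setOf_isMinOn_Iic {α : Type*} [LinearOrder α] {T : ℕ → α}
    (hT : ¬BddBelow (Set.range T)) : {p | IsMinOn T (Set.Iic p) p}.Infinite := by
  refine Set.infinite_of_forall_exists_gt fun N => ?_
  obtain ⟨m₀, -, hm₀⟩ := (Finset.Iic N).exists_min_image T ⟨N, by simp⟩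
  obtain ⟨_, ⟨n, rfl⟩, hn⟩ := not_bddBelow_iff.1 hT (T m₀)
  obtain ⟨p, hpn, hp⟩ := (Finset.Iic n).exists_min_image T ⟨n, by simp⟩
  refine ⟨p, fun m hm => hp m ?_, ?_⟩
  · simpa using (Set.mem_Iic.1 hm).trans (Finset.mem_Iic.1 hpn)
  -- `T p ≤ T n < min_{m ≤ N} T m`, so the minimiser `p` of `T` on `[0, n]` lies beyond `N`.
  by_contra! hpN
  exact (hp n (by simp)).not_gt (hn.trans_le (hm₀ p (by simpa using hpN)))

theorem sum_Icc_one_add_sum_Icc_add_one {M : Type*} [AddCommMonoid M] (a : ℕ → M)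
    {m p : ℕ} (hmp : m ≤ p) :
    ∑ j ∈ Icc 1 m, a j + ∑ j ∈ Icc (m + 1) p, a j = ∑ j ∈ Icc 1 p, a j := by
  have hIcc : ∀ n, Icc 1 n = Ioc 0 n := Icc_add_one_left_eq_Ioc 0
  rw [hIcc, hIcc, Icc_add_one_left_eq_Ioc]
  exact sum_Ioc_consecutive a (Nat.zero_le m) hmp

theorem sum_Icc_sub_add_one_le_of_isMinOn {a : ℕ → ℝ} {r : ℝ} {p : ℕ}
    (hp : IsMinOn (fun n : ℕ => ∑ j ∈ Icc 1 n, a j + r * n) (Set.Iic p) p) {k : ℕ}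
    (hk : k ≤ p) : ∑ j ∈ Icc (p - k + 1) p, a j ≤ -r * k := by
  have hmin := isMinOn_iff.1 hp _ (Set.mem_Iic.2 (Nat.sub_le p k))
  have hsplit := sum_Icc_one_add_sum_Icc_add_one a (Nat.sub_le p k)
  simp only [Nat.cast_sub hk] at hmin
  linarith

theorem prod_Icc_sub_add_one_le_exp_pow_of_isMinOn {b : ℕ → ℝ} (hb : ∀ j, 1 ≤ j → 0 < b j)
    {r : ℝ} {p : ℕ}
    (hp : IsMinOn (fun n : ℕ => ∑ j ∈ Icc 1 n, log (b j) + r * n) (Set.Iic p) p) {k : ℕ}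
    (hk : k ≤ p) : ∏ j ∈ Icc (p - k + 1) p, b j ≤ exp (-r) ^ k := by
  have hpos : ∀ j ∈ Icc (p - k + 1) p, 0 < b j := fun j hj => hb j (by grind)
  calc ∏ j ∈ Icc (p - k + 1) p, b j = exp (∑ j ∈ Icc (p - k + 1) p, log (b j)) := by
        rw [exp_sum]; exact prod_congr rfl fun j hj => (exp_log (hpos j hj)).symm
    _ ≤ exp (-r * k) := exp_le_exp.2 (sum_Icc_sub_add_one_le_of_isMinOn hp hk)
    _ = exp (-r) ^ k := by rw [← exp_nat_mul, mul_comm]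

theorem frequently_avg_lt_of_liminf_lt {a : ℕ → ℝ} {A c : ℝ} (ha : ∀ j, 1 ≤ j → a j ≤ A)
    (h : liminf (fun n : ℕ => (1 / (n : ℝ)) * ∑ j ∈ Icc 1 n, a j) atTop < c) :
    ∃ᶠ n : ℕ in atTop, (1 / (n : ℝ)) * ∑ j ∈ Icc 1 n, a j < c := by
  refine frequently_lt_of_liminf_lt (isCoboundedUnder_ge_of_eventually_le atTop (x := A) ?_) h
  filter_upwards [eventually_ge_atTop 1] with n hn
  have hsum : ∑ j ∈ Icc 1 n, a j ≤ n * A := by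
    simpa using sum_le_card_nsmul (Icc 1 n) a A fun j hj => ha j (mem_Icc.1 hj).1
  rw [one_div_mul_eq_div, div_le_iff₀ (by exact_mod_cast hn)]
  linarith

theorem not_bddBelow_range_add_mul_of_frequently_lt {u : ℕ → ℝ} {c r : ℝ} (hrc : r < c)
    (h : ∃ᶠ n : ℕ in atTop, (1 / (n : ℝ)) * u n < -c) :
    ¬BddBelow (Set.range fun n : ℕ => u n + r * n) := by
  rintro ⟨B, hB⟩
  obtain ⟨n, hn, hnB⟩ := (h.and_eventually (eventually_gt_atTop ⌈B / (r - c)⌉₊)).exists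
  have hn0 : (0 : ℝ) < n := by exact_mod_cast (Nat.zero_le _).trans_lt hnB
  rw [one_div_mul_eq_div, div_lt_iff₀ hn0] at hn
  have hBn : B / (r - c) < n := Nat.lt_of_ceil_lt hnB
  rw [div_lt_iff_of_neg (sub_neg.2 hrc)] at hBn
  linarith [hB ⟨n, rfl⟩]

theorem infinitely_many_hyperbolic_times_general (b : ℕ → ℝ) (A c : ℝ) (hc : 0 < c)
    (hbpos : ∀ j, 1 ≤ j → 0 < b j)
    (hbd : ∀ j, 1 ≤ j → |Real.log (b j)| ≤ A)
    (hliminf : Filter.liminf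
        (fun n : ℕ => (1 / (n : ℝ)) * ∑ j ∈ Finset.Icc 1 n, Real.log (b j))
        Filter.atTop < -c)
    (σ : ℝ) (hσ : σ = Real.exp (-(c / 2))) :
    {n : ℕ | 1 ≤ n ∧ ∀ k, 1 ≤ k → k ≤ n →
      ∏ j ∈ Finset.Icc (n - k + 1) n, b j ≤ σ ^ k}.Infinite := by
  have hfreq := frequently_avg_lt_of_liminf_lt (fun j hj => (abs_le.1 (hbd j hj)).2) hliminf
  have hT := not_bddBelow_range_add_mul_of_frequently_lt (half_lt_self hc) hfreq
  refine ((Set.infinite_setOf_isMinOn_Iic hT).sdiff (Set.finite_singleton 0)).mono ?_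
  rintro p ⟨hp, hp0⟩
  refine ⟨Nat.one_le_iff_ne_zero.2 hp0, fun k _ hk => ?_⟩
  rw [hσ]
  exact prod_Icc_sub_add_one_le_exp_pow_of_isMinOn hbpos hp hk

/-- If `(b_j)_{j ≥ 1}` is a sequence of positive reals with `|log b_j| ≤ A`, and
`liminf (1/n) ∑_{j=1}^n log b_j < -c` for some `c > 0`, then, with `σ = e^{-c/2}`,
there are infinitely many `σ`-hyperbolic times for `(b_j)`, i.e. infinitely many
`n ≥ 1` such that `∏_{j=n-k+1}^{n} b_j ≤ σ^k` for all `1 ≤ k ≤ n`. -/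
theorem infinitely_many_hyperbolic_times (b : ℕ → ℝ) (A c : ℝ) (hA : 0 < A) (hc : 0 < c)
    (hbpos : ∀ j, 1 ≤ j → 0 < b j)
    (hbd : ∀ j, 1 ≤ j → |Real.log (b j)| ≤ A)
    (hliminf : Filter.liminf
        (fun n : ℕ => (1 / (n : ℝ)) * ∑ j ∈ Finset.Icc 1 n, Real.log (b j))
        Filter.atTop < -c)
    (σ : ℝ) (hσ : σ = Real.exp (-(c / 2))) :
    {n : ℕ | 1 ≤ n ∧ ∀ k, 1 ≤ k → k ≤ n →
      ∏ j ∈ Finset.Icc (n - k + 1) n, b j ≤ σ ^ k}.Infinite :=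
  infinitely_many_hyperbolic_times_general b A c hc hbpos hbd hliminf σ hσ
end

section
/- Let μ be a measure on a measurable space, let ε > 0 and γ > 0, and let C and A be measurable sets with C ⊆ A, 0 < μ(C) < ∞ and μ(A \ C) < ε·μ(C). Let I be a finite index set and let (V_i)_{i∈I} and (W_i)_{i∈I} be families of measurable sets such that: C ⊆ ⋃_{i∈I} V_i; W_i ⊆ V_i ⊆ A for every i ∈ I; μ(W_i) ≥ γ·μ(V_i) for every i ∈ I; and the sets (W_i)_{i∈I} are pairwise disjoint. Then ∑_{i∈I} μ(W_i) ≥ γ·μ(C), and there exists i ∈ I with μ(W_i) > 0 and μ(W_i \ C) ≤ (ε/γ)·μ(W_i), i.e. the relative measure of C in W_i is at least 1 − ε/γ. -/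
/-!
The covering gives `γ μ(C) ≤ ∑ μ(W_i)`. The parts `W_i \ C` are disjoint and lie in `A \ C`, so
`∑ μ(W_i \ C) ≤ μ(A \ C) < ε μ(C) ≤ (ε/γ) ∑ μ(W_i)`, and some term of the left sum is smaller
than the corresponding term on the right.
-/

open MeasureTheory

namespace MeasureTheory

variable {α ι : Type*} [MeasurableSpace α] (μ : Measure α)

theorem measure_biUnion_finset_inter {I : Finset ι} {W : ι → Set α}
    (hd : (I : Set ι).PairwiseDisjoint W) (hm : ∀ i ∈ I, MeasurableSet (W i)) (t : Set α) :
    μ ((⋃ i ∈ I, W i) ∩ t) = ∑ i ∈ I, μ (W i ∩ t) := by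
  have hm' : ∀ i : I, MeasurableSet (W i) := fun i => hm i i.2
  have hU : ⋃ i ∈ I, W i = ⋃ i : I, W i := by ext; simp
  rw [Set.inter_comm, hU, ← Measure.restrict_apply' (MeasurableSet.iUnion hm'),
    Measure.restrict_iUnion (s := fun i : I => W i)
      (fun i j hij => hd i.2 j.2 (Subtype.coe_ne_coe.2 hij)) hm',
    Measure.sum_apply_of_countable, tsum_fintype, ← Finset.sum_coe_sort I]
  exact Finset.sum_congr rfl fun i _ => by rw [Measure.restrict_apply' (hm' i), Set.inter_comm]

theorem mul_measure_le_sum_of_subset_biUnion {c : ENNReal} {C : Set α} {I : Finset ι}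
    {V W : ι → Set α} (hcover : C ⊆ ⋃ i ∈ I, V i) (hVW : ∀ i ∈ I, c * μ (V i) ≤ μ (W i)) :
    c * μ C ≤ ∑ i ∈ I, μ (W i) :=
  calc c * μ C ≤ c * ∑ i ∈ I, μ (V i) := by
        gcongr; exact (measure_mono hcover).trans (measure_biUnion_finset_le I V)
    _ = ∑ i ∈ I, c * μ (V i) := Finset.mul_sum _ _ _
    _ ≤ ∑ i ∈ I, μ (W i) := Finset.sum_le_sum hVW

end MeasureTheory

theorem measure_pigeonhole_general {Ω : Type*} [MeasurableSpace Ω] (μ : Measure Ω)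
    (ε γ : ℝ) (hγ : 0 < γ)
    (C A : Set Ω)
    (hAC : μ (A \ C) < ENNReal.ofReal ε * μ C)
    {ι : Type*} (I : Finset ι) (V W : ι → Set Ω)
    (hWm : ∀ i ∈ I, MeasurableSet (W i))
    (hcover : C ⊆ ⋃ i ∈ I, V i)
    (hWV : ∀ i ∈ I, W i ⊆ V i) (hVA : ∀ i ∈ I, V i ⊆ A)
    (hγW : ∀ i ∈ I, ENNReal.ofReal γ * μ (V i) ≤ μ (W i))
    (hdisj : ∀ i ∈ I, ∀ j ∈ I, i ≠ j → Disjoint (W i) (W j)) :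
    ENNReal.ofReal γ * μ C ≤ ∑ i ∈ I, μ (W i) ∧
    ∃ i ∈ I, 0 < μ (W i) ∧ μ (W i \ C) ≤ ENNReal.ofReal (ε / γ) * μ (W i) := by
  have hsum := mul_measure_le_sum_of_subset_biUnion μ hcover hγW
  have hWA : (⋃ i ∈ I, W i) \ C ⊆ A \ C :=
    Set.sdiff_subset_sdiff_left (Set.iUnion₂_subset fun i hi => (hWV i hi).trans (hVA i hi))
  have hexcess : ∑ i ∈ I, μ (W i \ C) < ∑ i ∈ I, ENNReal.ofReal (ε / γ) * μ (W i) :=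
    calc ∑ i ∈ I, μ (W i \ C) = μ ((⋃ i ∈ I, W i) \ C) :=
          (measure_biUnion_finset_inter μ hdisj hWm Cᶜ).symm
      _ ≤ μ (A \ C) := measure_mono hWA
      _ < ENNReal.ofReal ε * μ C := hAC
      _ = ENNReal.ofReal (ε / γ) * (ENNReal.ofReal γ * μ C) := by
          rw [← mul_assoc, ← ENNReal.ofReal_mul' hγ.le, div_mul_cancel₀ _ hγ.ne']
      _ ≤ ENNReal.ofReal (ε / γ) * ∑ i ∈ I, μ (W i) := by gcongr
      _ = ∑ i ∈ I, ENNReal.ofReal (ε / γ) * μ (W i) := Finset.mul_sum _ _ _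
  obtain ⟨i, hi, hlt⟩ := Finset.exists_lt_of_sum_lt hexcess
  exact ⟨hsum, i, hi, pos_of_ne_zero fun h0 => by simp [h0] at hlt, hlt.le⟩

/-- **Measure-theoretic pigeonhole.** If `C ⊆ A` with `0 < μ C < ∞` and
`μ(A \ C) < ε μ(C)`, and `(V_i)_{i ∈ I}` covers `C` with `W_i ⊆ V_i ⊆ A`,
`μ(W_i) ≥ γ μ(V_i)` and the `W_i` pairwise disjoint, then `∑ μ(W_i) ≥ γ μ(C)` and
some `W_i` has `μ(W_i) > 0` and `μ(W_i \ C) ≤ (ε/γ) μ(W_i)`. -/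
theorem measure_pigeonhole {Ω : Type*} [MeasurableSpace Ω] (μ : Measure Ω)
    (ε γ : ℝ) (hε : 0 < ε) (hγ : 0 < γ)
    (C A : Set Ω) (hCm : MeasurableSet C) (hAm : MeasurableSet A)
    (hCA : C ⊆ A) (hC0 : 0 < μ C) (hCfin : μ C < ⊤)
    (hAC : μ (A \ C) < ENNReal.ofReal ε * μ C)
    {ι : Type*} (I : Finset ι) (V W : ι → Set Ω)
    (hVm : ∀ i ∈ I, MeasurableSet (V i)) (hWm : ∀ i ∈ I, MeasurableSet (W i))
    (hcover : C ⊆ ⋃ i ∈ I, V i)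
    (hWV : ∀ i ∈ I, W i ⊆ V i) (hVA : ∀ i ∈ I, V i ⊆ A)
    (hγW : ∀ i ∈ I, ENNReal.ofReal γ * μ (V i) ≤ μ (W i))
    (hdisj : ∀ i ∈ I, ∀ j ∈ I, i ≠ j → Disjoint (W i) (W j)) :
    ENNReal.ofReal γ * μ C ≤ ∑ i ∈ I, μ (W i) ∧
    ∃ i ∈ I, 0 < μ (W i) ∧ μ (W i \ C) ≤ ENNReal.ofReal (ε / γ) * μ (W i) :=
  measure_pigeonhole_general μ ε γ hγ C A hAC I V W hWm hcover hWV hVA hγW hdisj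
end
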